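/- arXiv:2603.24534 — 2 statements merged into one kernel-verified Lean document; each statement's English description precedes it below -/
import Mathlib

section
/- Let n ≥ 2, Δ̃ ∈ ℝ and Ã ∈ Λ^{n−2}(ℝ^n)*, and define the split frame E^a := e^{Δ̃}·(dy^a, dy^a ∧ s(Ã)) ∈ W and E'^a := e^{Δ̃}·(0, ι_{e_a}vol) ∈ W for a = 1,…,n. Then B(E^a, E^b) = 0, B(E'^a, E'^b) = 0, and B(E^a, E'^b) = e^{2Δ̃} δ^{ab}·vol for all a, b, and the 2n elements {E^a, E'^a} form a basis of W. (Thus the split frame consists of two B-isotropic subspaces dually paired by B, realising the split signature of the Spin(n,n)-invariant inner product.) -/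
open scoped BigOperators

noncomputable section

/-- `ℝ^n` -/
abbrev Vn (n : ℕ) : Type := Fin n → ℝ

/-- alternating `k`-forms on `ℝ^n`, i.e. `Λ^k (ℝ^n)^*` (also used as a model of the space
`Λ^k ℝ^n` of `k`-vectors, a `k`-vector being recorded through its components
`β^{i_1…i_k} = β(e_{i_1},…,e_{i_k})` with respect to the standard basis). -/
abbrev Form (n k : ℕ) : Type := (Vn n) [⋀^Fin k]→ₗ[ℝ] ℝ

/-- the standard basis vector `e_m` of `ℝ^n` -/
def ee {n : ℕ} (m : Fin n) : Vn n := Pi.single m 1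

/-- the determinant (volume) form `vol = dy^1 ∧ ⋯ ∧ dy^n` -/
def vol (n : ℕ) : Form n n := (Pi.basisFun ℝ (Fin n)).det

/-- regard a covector as a `1`-form -/
def oneForm {n : ℕ} (α : Module.Dual ℝ (Vn n)) : Form n 1 :=
  AlternatingMap.ofSubsingleton ℝ (Vn n) ℝ (0 : Fin 1) α

/-- the dual basis covector `dy^m`, as a `1`-form -/
def dy {n : ℕ} (m : Fin n) : Form n 1 := oneForm (LinearMap.proj m)

/-- re-index a form along an equality of degrees -/
def Form.castDeg {n a b : ℕ} (h : a = b) (ω : Form n a) : Form n b :=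
  ω.domDomCongr (finCongr h)

/-- the wedge product of alternating forms (shuffle convention, so that
`dy^1 ∧ ⋯ ∧ dy^n = vol` and `(α ∧ ω)(v_0,…,v_k) = ∑_i (-1)^i α(v_i) ω(v_0,…,v̂_i,…,v_k)`
for a `1`-form `α`) -/
def wedge {n a b : ℕ} (ω : Form n a) (τ : Form n b) : Form n (a + b) :=
  ((TensorProduct.lid ℝ ℝ).toLinearMap.compAlternatingMap (ω.domCoprod τ)).domDomCongr
    finSumFinEquiv

/-- the interior product `ι_{e_m} ω = ω(e_m, ·, …, ·)`; `ι_{e_m} vol` is the flat-space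
Hodge dual `⋆ dy^m` -/
def iotaE {n k : ℕ} (m : Fin n) (ω : Form n (k + 1)) : Form n k := ω.curryLeft (ee m)

/-- `W := (ℝ^n)^* ⊕ Λ^{n-1}(ℝ^n)^*`, for `n = N + 1` -/
abbrev Wsp (N : ℕ) : Type := Form (N + 1) 1 × Form (N + 1) N

/-- the `Λ^n(ℝ^n)^*`-valued symmetric pairing `B((η,η̃),(η',η̃')) := η ∧ η̃' + η' ∧ η̃`
(the `Spin(n,n)`-invariant inner product on the bundle `X`). -/
def Bf {N : ℕ} (Y Y' : Wsp N) : Form (N + 1) (N + 1) :=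
  Form.castDeg (Nat.add_comm 1 N) (wedge Y.1 Y'.2 + wedge Y'.1 Y.2)

/-- contraction of a list of `k` vectors into the first `k` arguments of a `(q+k)`-form -/
def mcontract {n : ℕ} : {k q : ℕ} → (Fin k → Vn n) → Form n (q + k) → Form n q
  | 0, _, _, ω => ω
  | (k + 1), q, u, ω => mcontract (k := k) (q := q) (fun j => u j.succ) (ω.curryLeft (u 0))

/-- interior product `ι_β ω` of a `k`-vector `β` (given through its components
`β^{i_1…i_k} = β(e_{i_1},…,e_{i_k})`) into the first `k` arguments of a `(q+k)`-form `ω`: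
`(ι_β ω) = (1/k!) ∑ β^{i_1…i_k} ω(e_{i_1},…,e_{i_k},·,…,·)`. -/
def contract {n k q : ℕ} (β : Form n k) (ω : Form n (q + k)) : Form n q :=
  ((Nat.factorial k : ℕ) : ℝ)⁻¹ • ∑ I : Fin k → Fin n,
    β (fun j => ee (I j)) • mcontract (fun j => ee (I j)) ω

/-- `s(λ) := (-1)^{⌊p/2⌋} λ` on `p`-forms -/
def sform {n k : ℕ} (ω : Form n k) : Form n k := ((-1 : ℝ) ^ (k / 2)) • ω

/-- the derivation action `ρ(r)` of `r ∈ End(ℝ^n)` on forms, extending `α ↦ -α∘r`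
on covectors; concretely `ρ(r)ω = -∑_{a,b} r^a{}_b · dy^b ∧ ι_{e_a}ω`. -/
def rho {n : ℕ} (r : Module.End ℝ (Vn n)) : {k : ℕ} → Form n k → Form n k
  | 0, _ => 0
  | (s + 1), ω =>
      -∑ a : Fin n, ∑ b : Fin n,
        r (ee b) a • Form.castDeg (Nat.add_comm 1 s) (wedge (dy b) (ω.curryLeft (ee a)))

/-- the derivation action `ρ̂(r)` of `r ∈ End(ℝ^n)` on multivectors (represented through
their components as alternating maps), extending `v ↦ r v` on vectors;
concretely `ρ̂(r)β = ∑_{a,b} r^b{}_a · dy^b ∧ ι_{e_a}β` in the components model. -/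
def rhoHat {n : ℕ} (r : Module.End ℝ (Vn n)) : {k : ℕ} → Form n k → Form n k
  | 0, _ => 0
  | (s + 1), β =>
      ∑ a : Fin n, ∑ b : Fin n,
        r (ee a) b • Form.castDeg (Nat.add_comm 1 s) (wedge (dy b) (β.curryLeft (ee a)))

/-- the full contraction `⟨β, b⟩ = (1/k!) β^{i_1…i_k} b_{i_1…i_k}` -/
def fullContract {n k : ℕ} (β b : Form n k) : ℝ :=
  ((Nat.factorial k : ℕ) : ℝ)⁻¹ * ∑ I : Fin k → Fin n,
    β (fun j => ee (I j)) * b (fun j => ee (I j))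

/-- the single-index partial contraction `C(β,b)^a{}_c = (1/m!) β^{a j_1…j_m} b_{c j_1…j_m}`
of a degree-`(m+1)` multivector `β` and form `b`, as an endomorphism of `ℝ^n`. -/
def Cmat {n m : ℕ} (β b : Form n (m + 1)) : Module.End ℝ (Vn n) :=
  Matrix.toLin' (Matrix.of fun a c : Fin n =>
    ((Nat.factorial m : ℕ) : ℝ)⁻¹ * ∑ J : Fin m → Fin n,
      β (Fin.cons (ee a) fun j => ee (J j)) * b (Fin.cons (ee c) fun j => ee (J j)))

/-- the inner product on `k`-forms induced by the standard inner product of `ℝ^n`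
(the `dy^{i_1} ∧ ⋯ ∧ dy^{i_k}`, `i_1 < ⋯ < i_k`, are orthonormal; equivalently on
`(n-1)`-forms it is the inner product making `ι_{e_1}vol, …, ι_{e_n}vol` orthonormal). -/
def ipk {n k : ℕ} (ω ω' : Form n k) : ℝ :=
  ((Nat.factorial k : ℕ) : ℝ)⁻¹ * ∑ I : Fin k → Fin n,
    ω (fun j => ee (I j)) * ω' (fun j => ee (I j))

/-! For a `1`-form `α`, `α ∧ ω` is Mathlib's `alternatizeUncurryFin` of `v ↦ α v • ω`: the
`(1, k)`-shuffles in the definition of `wedge` are the cycles `cycleRange i`, one for each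
position `i` of the `1`-form's slot. Isotropy of the `E^a` is then the vanishing of twice
uncurried symmetric maps, and `α ∧ ι_{e_b} F = α(e_b) F` for top forms `F` gives
`B(E^a, E'^b) = e^{2Δ̃} δ^{ab} vol`. By symmetry of `B`, pairing `(E, E')` against `(E', E)`
gives the identity matrix times `e^{2Δ̃} vol`, so the frame is linearly independent, and as
`dim W = n + C(n, n - 1) = 2n` it is a basis. -/

section SplitFrame

open Equiv Fin

theorem mem_sumCongrHom_range_iff_apply_inl_zero {β : Type*} [Finite β] (τ : Perm (Fin 1 ⊕ β)) :
    τ ∈ (Perm.sumCongrHom (Fin 1) β).range ↔ τ (.inl 0) = .inl 0 := by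
  constructor
  · rintro ⟨⟨σ, _⟩, rfl⟩
    simp [Subsingleton.elim (σ 0) 0]
  · intro h
    refine Perm.mem_sumCongrHom_range_of_perm_mapsTo_inl ?_
    rintro _ ⟨x, rfl⟩
    exact ⟨0, by rw [Subsingleton.elim x 0, h]⟩

def sumFinOne (k : ℕ) : Fin 1 ⊕ Fin k ≃ Fin (k + 1) :=
  finSumFinEquiv.trans (finCongr (Nat.add_comm 1 k))

@[simp] lemma sumFinOne_inl (k : ℕ) (x : Fin 1) : sumFinOne k (.inl x) = 0 := by
  ext; simp [sumFinOne, Subsingleton.elim x 0]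

@[simp] lemma sumFinOne_inr (k : ℕ) (j : Fin k) : sumFinOne k (.inr j) = j.succ := by
  ext; simp [sumFinOne]

def shuffleAt {k : ℕ} (i : Fin (k + 1)) : Perm (Fin 1 ⊕ Fin k) :=
  (sumFinOne k).symm.permCongr i.cycleRange.symm

lemma sumFinOne_shuffleAt {k : ℕ} (i : Fin (k + 1)) (x : Fin 1 ⊕ Fin k) :
    sumFinOne k (shuffleAt i x) = i.cycleRange.symm (sumFinOne k x) := by
  simp [shuffleAt, Equiv.permCongr_apply]

lemma sign_shuffleAt {k : ℕ} (i : Fin (k + 1)) : Perm.sign (shuffleAt i) = (-1) ^ (i : ℕ) := by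
  simp [shuffleAt, Perm.sign_permCongr, Fin.sign_cycleRange]

lemma bijective_mk_shuffleAt (k : ℕ) :
    Function.Bijective fun i : Fin (k + 1) =>
      (QuotientGroup.mk (shuffleAt i) : Perm.ModSumCongr (Fin 1) (Fin k)) := by
  -- a coset of shuffles is determined by where it sends the slot of the `1`-form
  have key : ∀ i (σ : Perm (Fin 1 ⊕ Fin k)),
      (QuotientGroup.mk (shuffleAt i) : Perm.ModSumCongr (Fin 1) (Fin k)) = QuotientGroup.mk σ ↔
        sumFinOne k (σ (.inl 0)) = i := by
    intro i σ
    rw [QuotientGroup.eq, mem_sumCongrHom_range_iff_apply_inl_zero, Perm.mul_apply,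
      Perm.inv_eq_iff_eq, ← (sumFinOne k).apply_eq_iff_eq, sumFinOne_shuffleAt, sumFinOne_inl,
      cycleRange_symm_zero, eq_comm]
  refine ⟨fun i j h => ?_, fun q => ?_⟩
  · rw [key, sumFinOne_shuffleAt, sumFinOne_inl, cycleRange_symm_zero] at h
    exact h.symm
  · obtain ⟨σ, rfl⟩ := QuotientGroup.mk_surjective q
    exact ⟨_, (key _ σ).mpr rfl⟩

def Form.toDual {n : ℕ} (α : Form n 1) : Module.Dual ℝ (Vn n) :=
  (AlternatingMap.ofSubsingleton ℝ (Vn n) ℝ (0 : Fin 1)).symm α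

@[simp] lemma Form.toDual_apply {n : ℕ} (α : Form n 1) (v : Vn n) :
    Form.toDual α v = α (fun _ => v) := rfl

/-- `α ∧ ω` for a `1`-form `α`, with its degree written `k + 1`. -/
def wedgeOne {n k : ℕ} (α : Form n 1) (ω : Form n k) : Form n (k + 1) :=
  Form.castDeg (Nat.add_comm 1 k) (wedge α ω)

theorem wedgeOne_eq_alternatizeUncurryFin {n k : ℕ} (α : Form n 1) (ω : Form n k) :
    wedgeOne α ω = AlternatingMap.alternatizeUncurryFin ((Form.toDual α).smulRight ω) := by
  ext u
  rw [AlternatingMap.alternatizeUncurryFin_apply]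
  have hsum : wedgeOne α ω u = TensorProduct.lid ℝ ℝ
      (∑ q : Perm.ModSumCongr (Fin 1) (Fin k),
        AlternatingMap.domCoprod.summand α ω q (u ∘ sumFinOne k)) := by
    rw [← sum_apply, ← AlternatingMap.domCoprod_coe]
    rfl
  rw [hsum, map_sum]
  refine (Fintype.sum_bijective _ (bijective_mk_shuffleAt k) _ _ fun i => ?_).symm
  rw [QuotientGroup.mk, AlternatingMap.domCoprod.summand_mk'']
  simp only [smul_apply, MultilinearMap.domDomCongr_apply, sign_shuffleAt,
    MultilinearMap.domCoprod_apply, Function.comp_apply, sumFinOne_shuffleAt]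
  rw [Units.smul_def, map_zsmul, TensorProduct.lid_tmul]
  simp only [sumFinOne_inl, sumFinOne_inr, cycleRange_symm_zero, cycleRange_symm_succ,
    LinearMap.smulRight_apply, Form.toDual_apply, zsmul_eq_mul]
  rfl

def wedgeOneₗ (n k : ℕ) : Form n 1 →ₗ[ℝ] Form n k →ₗ[ℝ] Form n (k + 1) :=
  LinearMap.mk₂ ℝ wedgeOne
    (fun α β ω => by
      simp only [wedgeOne_eq_alternatizeUncurryFin, ← AlternatingMap.alternatizeUncurryFin_add]
      congr 1; ext; simp [add_smul])
    (fun c α ω => by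
      simp only [wedgeOne_eq_alternatizeUncurryFin, ← AlternatingMap.alternatizeUncurryFin_smul]
      congr 1; ext; simp [mul_smul])
    (fun α ω τ => by
      simp only [wedgeOne_eq_alternatizeUncurryFin, ← AlternatingMap.alternatizeUncurryFin_add]
      congr 1; ext; simp)
    (fun c α ω => by
      simp only [wedgeOne_eq_alternatizeUncurryFin, ← AlternatingMap.alternatizeUncurryFin_smul]
      congr 1; ext; simp [smul_comm c])

@[simp] lemma wedgeOneₗ_apply {n k : ℕ} (α : Form n 1) (ω : Form n k) :
    wedgeOneₗ n k α ω = wedgeOne α ω := rfl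

@[simp] lemma wedgeOne_zero_left {n k : ℕ} (ω : Form n k) : wedgeOne 0 ω = 0 := by
  rw [← wedgeOneₗ_apply, map_zero, LinearMap.zero_apply]

theorem wedgeOne_wedgeOne_add_swap {n k : ℕ} (α β : Form n 1) (σ : Form n k) :
    wedgeOne α (wedgeOne β σ) + wedgeOne β (wedgeOne α σ) = 0 := by
  have hsymm := AlternatingMap.alternatizeUncurryFin_alternatizeUncurryFinLM_comp_of_symmetric
    (f := (Form.toDual α).smulRight ((Form.toDual β).smulRight σ) +
      (Form.toDual β).smulRight ((Form.toDual α).smulRight σ))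
    (fun x y => by ext; simp; ring)
  rw [← hsymm]
  simp only [wedgeOne_eq_alternatizeUncurryFin, ← AlternatingMap.alternatizeUncurryFin_add]
  congr 1
  ext
  simp

lemma coe_basisFun (n : ℕ) : ⇑(Pi.basisFun ℝ (Fin n)) = ee := by
  funext i; simp [ee]

lemma vol_ee (n : ℕ) : vol n ee = 1 := by
  rw [vol, ← coe_basisFun, Module.Basis.det_self]

lemma vol_ne_zero (n : ℕ) : vol n ≠ 0 := fun h => by
  simpa [h] using vol_ee n

lemma dy_apply_ee {n : ℕ} (a b : Fin n) : dy a (fun _ => ee b) = if a = b then 1 else 0 := by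
  simp [dy, oneForm, ee, Pi.single_apply]

lemma Form.eq_smul_vol {n : ℕ} (f : Form n n) : f = f ee • vol n := by
  have h := AlternatingMap.eq_smul_basis_det (Pi.basisFun ℝ (Fin n)) f
  rwa [coe_basisFun] at h

theorem wedgeOne_iotaE {k : ℕ} (α : Form (k + 1) 1) (b : Fin (k + 1))
    (F : Form (k + 1) (k + 1)) :
    wedgeOne α (iotaE b F) = α (fun _ => ee b) • F := by
  rw [Form.eq_smul_vol (wedgeOne α _)]
  conv_rhs => rw [Form.eq_smul_vol F, smul_smul]
  congr 1
  have hterm : ∀ i : Fin (k + 1),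
      (-1 : ℤ) ^ (i : ℕ) • (α (fun _ => ee i) • iotaE b F (i.removeNth ee))
        = α (fun _ => ee i) • F (Function.update ee i (ee b)) := by
    intro i
    rw [iotaE, AlternatingMap.curryLeft_apply_apply, smul_comm,
      ← AlternatingMap.neg_one_pow_smul_map_insertNth, smul_smul, ← pow_add,
      Even.neg_one_pow ⟨_, rfl⟩, one_smul, Fin.insertNth_removeNth]
  rw [wedgeOne_eq_alternatizeUncurryFin, AlternatingMap.alternatizeUncurryFin_apply]
  simp only [LinearMap.smulRight_apply, Form.toDual_apply, AlternatingMap.smul_apply]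
  rw [Finset.sum_congr rfl fun i _ => hterm i, Finset.sum_eq_single b]
  · rw [Function.update_eq_self, smul_eq_mul]
  · intro i _ hib
    rw [F.map_eq_zero_of_eq _ (i := i) (j := b) (by simp [Function.update_of_ne hib.symm]) hib,
      smul_zero]
  · simp

lemma Bf_eq {N : ℕ} (Y Y' : Wsp N) : Bf Y Y' = wedgeOne Y.1 Y'.2 + wedgeOne Y'.1 Y.2 := rfl

lemma Bf_comm {N : ℕ} (Y Y' : Wsp N) : Bf Y Y' = Bf Y' Y := by
  rw [Bf_eq, Bf_eq]
  exact add_comm (wedgeOne Y.1 Y'.2) _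

def Bfₗ (N : ℕ) : Wsp N →ₗ[ℝ] Wsp N →ₗ[ℝ] Form (N + 1) (N + 1) :=
  LinearMap.mk₂ ℝ Bf
    (fun Y Y' Z => by
      simp only [Bf_eq, Prod.fst_add, Prod.snd_add, ← wedgeOneₗ_apply, map_add,
        LinearMap.add_apply]
      abel)
    (fun c Y Z => by
      simp only [Bf_eq, Prod.smul_fst, Prod.smul_snd, ← wedgeOneₗ_apply, map_smul,
        LinearMap.smul_apply, smul_add])
    (fun Y Z Z' => by
      simp only [Bf_eq, Prod.fst_add, Prod.snd_add, ← wedgeOneₗ_apply, map_add,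
        LinearMap.add_apply]
      abel)
    (fun c Y Z => by
      simp only [Bf_eq, Prod.smul_fst, Prod.smul_snd, ← wedgeOneₗ_apply, map_smul,
        LinearMap.smul_apply, smul_add])

@[simp] lemma Bfₗ_apply {N : ℕ} (Y Y' : Wsp N) : Bfₗ N Y Y' = Bf Y Y' := rfl

lemma Bf_smul_smul {N : ℕ} (c d : ℝ) (Y Y' : Wsp N) :
    Bf (c • Y) (d • Y') = (c * d) • Bf Y Y' := by
  rw [← Bfₗ_apply, map_smul, LinearMap.map_smul₂, smul_smul, mul_comm, Bfₗ_apply]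

lemma Bf_zero_fst {N : ℕ} (x y : Form (N + 1) N) : Bf (0, x) (0, y) = 0 := by
  simp [Bf_eq]

theorem linearIndependent_of_pairing {ι K M P N : Type*} [Field K] [AddCommGroup M] [Module K M]
    [AddCommGroup P] [Module K P] [AddCommGroup N] [Module K N] [DecidableEq ι]
    (B : M →ₗ[K] P →ₗ[K] N) {f : ι → M} {g : ι → P} {w : N} (hw : w ≠ 0)
    (hfg : ∀ i j, B (f i) (g j) = if i = j then w else 0) : LinearIndependent K f := by
  have hcomp : (LinearMap.pi fun j => B.flip (g j)) ∘ f = fun i => Pi.single i w := by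
    ext i j
    simp [hfg, Pi.single_apply, eq_comm]
  exact .of_comp _ (hcomp ▸ Pi.linearIndependent_single_of_ne_zero fun _ => hw)

instance (n k : ℕ) : Module.Finite ℝ (Form n k) :=
  .equiv exteriorPower.alternatingMapLinearEquiv.symm

lemma finrank_form (n k : ℕ) : Module.finrank ℝ (Form n k) = n.choose k := by
  rw [(exteriorPower.alternatingMapLinearEquiv).finrank_eq, Subspace.dual_finrank_eq,
    exteriorPower.finrank_eq, Module.finrank_fin_fun]

lemma finrank_Wsp (N : ℕ) : Module.finrank ℝ (Wsp N) = (N + 1) + (N + 1) := by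
  rw [Module.finrank_prod, finrank_form, finrank_form, Nat.choose_one_right,
    Nat.choose_succ_self_right]

end SplitFrame

/-- For `n ≥ 2` (written `n = m + 2`), `Δ̃ ∈ ℝ` and `Ã ∈ Λ^{n-2}(ℝ^n)^*`,
the split frame `E^a := e^{Δ̃}·(dy^a, dy^a ∧ s(Ã))`, `E'^a := e^{Δ̃}·(0, ι_{e_a}vol)`
satisfies `B(E^a, E^b) = 0`, `B(E'^a, E'^b) = 0`, `B(E^a, E'^b) = e^{2Δ̃} δ^{ab}·vol`, and
the `2n` elements `{E^a, E'^a}` form a basis of `W`. -/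
theorem split_frame_isotropic (m : ℕ) (Δ : ℝ) (A : Form (m + 2) m) :
    let E : Fin (m + 2) → Wsp (m + 1) := fun a =>
      Real.exp Δ •
        ((dy a, Form.castDeg (Nat.add_comm 1 m) (wedge (dy a) (sform A))) : Wsp (m + 1))
    let E' : Fin (m + 2) → Wsp (m + 1) := fun a =>
      Real.exp Δ • ((0, iotaE a (vol (m + 2))) : Wsp (m + 1))
    (∀ a b : Fin (m + 2), Bf (E a) (E b) = 0) ∧
    (∀ a b : Fin (m + 2), Bf (E' a) (E' b) = 0) ∧
    (∀ a b : Fin (m + 2),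
      Bf (E a) (E' b) = (Real.exp (2 * Δ) * if a = b then 1 else 0) • vol (m + 2)) ∧
    LinearIndependent ℝ (Sum.elim E E') ∧
    Submodule.span ℝ (Set.range (Sum.elim E E')) = ⊤ := by
  intro E E'
  have hexp : Real.exp Δ * Real.exp Δ = Real.exp (2 * Δ) := by rw [← Real.exp_add, two_mul]
  have hEE : ∀ a b, Bf (E a) (E b) = 0 := fun a b => by
    rw [Bf_smul_smul, Bf_eq]
    exact (congrArg _ (wedgeOne_wedgeOne_add_swap (dy a) (dy b) (sform A))).trans (smul_zero _)
  have hE'E' : ∀ a b, Bf (E' a) (E' b) = 0 := fun a b => by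
    rw [Bf_smul_smul, Bf_zero_fst, smul_zero]
  have hEE' : ∀ a b,
      Bf (E a) (E' b) = (Real.exp (2 * Δ) * if a = b then 1 else 0) • vol (m + 2) := fun a b => by
    rw [Bf_smul_smul, Bf_eq]
    dsimp only
    rw [wedgeOne_iotaE, wedgeOne_zero_left, add_zero, dy_apply_ee, hexp, smul_smul]
  have hli : LinearIndependent ℝ (Sum.elim E E') := by
    refine linearIndependent_of_pairing (Bfₗ (m + 1)) (g := Sum.elim E' E)
      (smul_ne_zero (Real.exp_ne_zero (2 * Δ)) (vol_ne_zero (m + 2))) ?_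
    rintro (a | a) (b | b) <;> simp [hEE, hE'E', hEE', Bf_comm (E' a) (E b), eq_comm]
  refine ⟨hEE, hE'E', hEE', hli, hli.span_eq_top_of_card_eq_finrank ?_⟩
  rw [finrank_Wsp, Fintype.card_sum, Fintype.card_fin]

end
end

section
/- Let n ≥ 3 and H > 0 a real number, and consider the generalised metric of the p-brane background determined by g̃ = H^{2/(n−2)} δ, Ã = 0, and e^{2Δ̃} = H^{−2/(n−2)}: explicitly, on W set G'((η,η̃),(η',η̃')) := H^{2/(n−2)} ( ⟨η, η'⟩_H + ⟨η̃, η̃'⟩_H ), where ⟨dy^m, dy^k⟩_H = H^{−2/(n−2)} δ^{mk} on covectors and ⟨ι_{e_m}vol, ι_{e_k}vol⟩_H = H^{−2(n−1)/(n−2)} δ^{mk} on (n−1)-forms. Then the structure tensors Ξ^m := (dy^m, (−1)^{⌊n/2⌋} H ι_{e_m}vol) satisfy G'(Ξ^m, Ξ^k) = 2 δ^{mk}, independently of the value of H. (Thus the Ξ^m are G'-orthogonal of constant norm, so they define a genuine Spin(n) ⊂ Spin(n) × Spin(n) reduction compatible with the background generalised metric.) -/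
open scoped BigOperators

noncomputable section

/-! The `dy^a` are orthonormal for `ipk`. For the `(n-1)`-forms,
`(ι_{e_a} vol)(e_I) = vol(e_{a::I})` is a sign when `a::I` is a permutation and `0` otherwise.
An injective `I` misses exactly one index, so the cross terms vanish and the diagonal counts
the `N!` orderings of the remaining indices: the `ι_{e_a} vol` are orthonormal too. The powers
of `H` then cancel: `H^{2/(n-2)} (H^{-2/(n-2)} + H^{-2(n-1)/(n-2)} H^2) = 2`. -/

lemma ipk_smul_smul {n k : ℕ} (c d : ℝ) (ω ω' : Form n k) :
    ipk (c • ω) (d • ω') = c * d * ipk ω ω' := by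
  simp only [ipk, AlternatingMap.smul_apply, smul_eq_mul, Finset.mul_sum]
  exact Finset.sum_congr rfl fun _ _ => by ring

lemma ipk_dy_dy {n : ℕ} (a b : Fin n) : ipk (dy a) (dy b) = if a = b then 1 else 0 := by
  have hdy : ∀ (c : Fin n) (I : Fin 1 → Fin n),
      dy c (fun j => ee (I j)) = if c = I 0 then 1 else 0 :=
    fun c I => Pi.single_apply _ _ _
  simp only [ipk, hdy, ite_mul, one_mul, zero_mul, Nat.factorial_one, Nat.cast_one, inv_one]
  rw [← (Equiv.funUnique (Fin 1) (Fin n)).symm.sum_comp]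
  simp [eq_comm]

lemma vol_ee_perm {n : ℕ} (σ : Equiv.Perm (Fin n)) :
    vol n (ee ∘ σ) = Equiv.Perm.sign σ := by
  have hee : (ee : Fin n → Vn n) = Pi.basisFun ℝ (Fin n) :=
    funext fun j => (Pi.basisFun_apply ℝ (Fin n) j).symm
  calc vol n (ee ∘ σ) = Equiv.Perm.sign σ • vol n ee := (vol n).map_perm ee σ
    _ = Equiv.Perm.sign σ := by
      rw [hee, vol, Module.Basis.det_self, Units.smul_def, zsmul_eq_mul, mul_one]

lemma vol_ee_comp_mul_self_of_injective {n : ℕ} {J : Fin n → Fin n} (hJ : J.Injective) :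
    vol n (ee ∘ J) * vol n (ee ∘ J) = 1 := by
  rw [show J = Equiv.ofBijective J (Finite.injective_iff_bijective.mp hJ) from rfl, vol_ee_perm,
    ← Int.cast_mul, ← Units.val_mul, Int.units_mul_self, Units.val_one, Int.cast_one]

lemma vol_ee_comp_of_not_injective {n : ℕ} {J : Fin n → Fin n} (hJ : ¬J.Injective) :
    vol n (ee ∘ J) = 0 :=
  (vol n).map_eq_zero_of_not_injective _ fun h => hJ (Function.Injective.of_comp (f := ee) h)

lemma iotaE_vol_ee_comp {N : ℕ} (a : Fin (N + 1)) (I : Fin N → Fin (N + 1)) :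
    iotaE a (vol (N + 1)) (ee ∘ I) = vol (N + 1) (ee ∘ Fin.cons a I) :=
  congrArg (vol (N + 1)) (Fin.comp_cons ee a I).symm

lemma eq_of_injective_cons {N : ℕ} {a b : Fin (N + 1)} {I : Fin N → Fin (N + 1)}
    (ha : (Fin.cons a I : Fin (N + 1) → Fin (N + 1)).Injective)
    (hb : (Fin.cons b I : Fin (N + 1) → Fin (N + 1)).Injective) : a = b := by
  have hsurj := Finite.injective_iff_surjective.mp ha
  rw [← Set.range_eq_univ, Fin.range_cons] at hsurj
  rcases (Set.eq_univ_iff_forall.mp hsurj b) with hba | hbI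
  · exact hba.symm
  · exact absurd hbI (Fin.cons_injective_iff.mp hb).1

lemma card_injective_cons {α : Type*} [Fintype α] [DecidableEq α] (k : ℕ) (a : α) :
    Fintype.card {I : Fin k → α // (Fin.cons a I : Fin (k + 1) → α).Injective} =
      (Fintype.card α - 1).descFactorial k := by
  have e : {I : Fin k → α // (Fin.cons a I : Fin (k + 1) → α).Injective} ≃
      (Fin k ↪ {x : α // x ≠ a}) :=
    { toFun := fun I => ⟨fun j => ⟨I.1 j, fun hj => (Fin.cons_injective_iff.mp I.2).1 ⟨j, hj⟩⟩,
        fun x y hxy => (Fin.cons_injective_iff.mp I.2).2 (congrArg Subtype.val hxy)⟩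
      invFun := fun f => ⟨fun j => f j, Fin.cons_injective_iff.mpr
        ⟨fun ⟨j, hj⟩ => (f j).2 hj, fun x y hxy => f.injective (Subtype.ext hxy)⟩⟩
      left_inv := fun _ => rfl
      right_inv := fun _ => rfl }
  rw [Fintype.card_congr e, Fintype.card_embedding_eq, Fintype.card_fin,
    Fintype.card_subtype_compl, Fintype.card_subtype_eq]

lemma ipk_iotaE_vol {N : ℕ} (a b : Fin (N + 1)) :
    ipk (iotaE a (vol (N + 1))) (iotaE b (vol (N + 1))) = if a = b then 1 else 0 := by
  simp only [ipk, ← Function.comp_def ee, iotaE_vol_ee_comp]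
  split_ifs with hab
  · subst hab
    have hterm : ∀ I : Fin N → Fin (N + 1),
        vol (N + 1) (ee ∘ Fin.cons a I) * vol (N + 1) (ee ∘ Fin.cons a I) =
          if (Fin.cons a I : Fin (N + 1) → Fin (N + 1)).Injective then 1 else 0 := fun I => by
      split_ifs with hI
      · exact vol_ee_comp_mul_self_of_injective hI
      · rw [vol_ee_comp_of_not_injective hI, mul_zero]
    rw [Finset.sum_congr rfl fun I _ => hterm I, Finset.sum_boole, ← Fintype.card_subtype,
      card_injective_cons, Fintype.card_fin, Nat.add_sub_cancel, Nat.descFactorial_self]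
    exact inv_mul_cancel₀ (Nat.cast_ne_zero.mpr (Nat.factorial_ne_zero N))
  · refine mul_eq_zero_of_right _ (Finset.sum_eq_zero fun I _ => ?_)
    by_cases ha : (Fin.cons a I : Fin (N + 1) → Fin (N + 1)).Injective
    · have hb : ¬(Fin.cons b I : Fin (N + 1) → Fin (N + 1)).Injective :=
        fun hb => hab (eq_of_injective_cons ha hb)
      rw [vol_ee_comp_of_not_injective hb, mul_zero]
    · rw [vol_ee_comp_of_not_injective ha, zero_mul]

/-- For `n ≥ 3` (written `n = p + 3`) and a real number `H > 0`, the
generalised metric of the `p`-brane background (`g̃ = H^{2/(n-2)} δ`, `Ã = 0`,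
`e^{2Δ̃} = H^{-2/(n-2)}`), namely
`G'((η,η̃),(η',η̃')) := H^{2/(n-2)}(⟨η,η'⟩_H + ⟨η̃,η̃'⟩_H)` with
`⟨·,·⟩_H = H^{-2/(n-2)}⟨·,·⟩` on covectors and `⟨·,·⟩_H = H^{-2(n-1)/(n-2)}⟨·,·⟩` on
`(n-1)`-forms, satisfies `G'(Ξ^m, Ξ^k) = 2 δ^{mk}` on the structure tensors
`Ξ^m := (dy^m, (-1)^{⌊n/2⌋} H ι_{e_m} vol)`, independently of the value of `H`. -/
theorem structure_tensors_Gprime_orthonormal (p : ℕ) (H : ℝ) (hH : 0 < H) :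
    let G' : Wsp (p + 2) → Wsp (p + 2) → ℝ := fun Y Y' =>
      H ^ ((2 : ℝ) / ((p : ℝ) + 1)) *
        (H ^ (-(2 : ℝ) / ((p : ℝ) + 1)) * ipk Y.1 Y'.1 +
          H ^ (-(2 * ((p : ℝ) + 2)) / ((p : ℝ) + 1)) * ipk Y.2 Y'.2)
    let Xi : Fin (p + 3) → Wsp (p + 2) := fun a =>
      (dy a, ((-1 : ℝ) ^ ((p + 3) / 2) * H) • iotaE a (vol (p + 3)))
    ∀ a b : Fin (p + 3), G' (Xi a) (Xi b) = 2 * if a = b then 1 else 0 := by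
  intro G' Xi a b
  set x := H ^ ((2 : ℝ) / ((p : ℝ) + 1))
  have hx_pos : 0 < x := Real.rpow_pos_of_pos hH _
  have h_covector : H ^ (-(2 : ℝ) / ((p : ℝ) + 1)) = x⁻¹ := by
    rw [neg_div, Real.rpow_neg hH.le]
  have h_form : H ^ (-(2 * ((p : ℝ) + 2)) / ((p : ℝ) + 1)) = x⁻¹ * (H ^ 2)⁻¹ := by
    have hexp : -(2 * ((p : ℝ) + 2)) / ((p : ℝ) + 1) = -((2 : ℝ) / ((p : ℝ) + 1) + 2) := by
      field_simp; ring
    rw [hexp, Real.rpow_neg hH.le, Real.rpow_add hH, Real.rpow_two, mul_inv]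
  have h_sign : (-1 : ℝ) ^ ((p + 3) / 2) * H * ((-1 : ℝ) ^ ((p + 3) / 2) * H) = H ^ 2 := by
    rw [mul_mul_mul_comm, ← mul_pow, neg_one_mul, neg_neg, one_pow, one_mul, sq]
  simp only [G', Xi]
  rw [ipk_dy_dy, ipk_smul_smul, ipk_iotaE_vol, h_covector, h_form, h_sign]
  field_simp
  ring

end
end
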